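/- In the finite one-dimensional screening problem, suppose the surplus function s(x, θ) = u(x, θ) + v(x, θ) has weak single-crossing differences. Then every optimal solution (x, t) of the downward-IC program has a monotone allocation rule: x_1 ≤ x_2 ≤ ⋯ ≤ x_n. -/

import Mathlib

/-!
Induction on the length of the monotone prefix. Let `(x, t)` be optimal, monotone up to `p`,
with `x (p+1) < x p`. Two deviations are feasible: move type `p` down to `x (p+1)` with a
transfer that keeps its utility (increasing differences protect the types above), and let
type `p+1` copy type `p`'s bundle (monotonicity of the prefix protects the IC constraints
below). Optimality against both says that the surplus weakly prefers `x p` to `x (p+1)` at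
`θ p` and the reverse at `θ (p+1)`; weak single crossing turns this into a tie at `θ p`.
So the first deviation is optimal as well, and in it type `p+1` may be pooled with type
`p`. Strict increasing differences make this pooling strictly raise the transfer of type
`p+1`, contradicting optimality.
-/

open Finset

noncomputable section

/-- Feasibility for the downward-IC program: allocations in `X`, all downward IC
constraints, and all IR constraints. Indices run over `0, …, n-1`. -/
def DFeas (n : ℕ) (X : Set ℝ) (u : ℝ → ℝ → ℝ) (θ : ℕ → ℝ)
    (x t : ℕ → ℝ) : Prop :=
  (∀ i, i < n → x i ∈ X) ∧
    (∀ i j, j < i → i < n → u (x i) (θ i) - t i ≥ u (x j) (θ i) - t j) ∧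
    (∀ i, i < n → u (x i) (θ i) - t i ≥ 0)

/-- The principal's objective. -/
def Obj (n : ℕ) (μ : ℕ → ℝ) (v : ℝ → ℝ → ℝ) (θ : ℕ → ℝ) (x t : ℕ → ℝ) : ℝ :=
  ∑ i ∈ range n, μ i * (v (x i) (θ i) + t i)

def IncreasingDiffOn (X : Set ℝ) (u : ℝ → ℝ → ℝ) : Prop :=
  ∀ x ∈ X, ∀ x' ∈ X, x ≤ x' → ∀ a a' : ℝ, a ≤ a' → u x' a - u x a ≤ u x' a' - u x a'

def IsOptimal (n : ℕ) (X : Set ℝ) (μ : ℕ → ℝ) (u v : ℝ → ℝ → ℝ) (θ : ℕ → ℝ)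
    (x t : ℕ → ℝ) : Prop :=
  DFeas n X u θ x t ∧ ∀ x' t' : ℕ → ℝ, DFeas n X u θ x' t' → Obj n μ v θ x' t' ≤ Obj n μ v θ x t

open Function

variable {n : ℕ} {X : Set ℝ} {μ θ : ℕ → ℝ} {u v : ℝ → ℝ → ℝ} {x t : ℕ → ℝ}

lemma increasingDiffOn_of_strict
    (hSID : ∀ x ∈ X, ∀ x' ∈ X, x < x' → ∀ a a' : ℝ, a < a' →
      u x' a - u x a < u x' a' - u x a') :
    IncreasingDiffOn X u := by
  intro y hy y' hy' hyy' a a' haa'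
  rcases hyy'.eq_or_lt with rfl | hlt
  · simp
  rcases haa'.eq_or_lt with rfl | hlt'
  · exact le_rfl
  · exact (hSID y hy y' hy' hlt a a' hlt').le

lemma obj_update {k : ℕ} (hk : k < n) (a b : ℝ) :
    Obj n μ v θ (update x k a) (update t k b) =
      Obj n μ v θ x t + μ k * ((v a (θ k) + b) - (v (x k) (θ k) + t k)) := by
  rw [← sub_eq_iff_eq_add', Obj, Obj, ← sum_sub_distrib]
  refine (sum_eq_single_of_mem k (mem_range.2 hk) fun i _ hik => ?_).trans ?_
  · simp only [update_of_ne hik, sub_self]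
  · simp only [update_self]; ring

lemma IsOptimal.update_le {k : ℕ} {a b : ℝ} (h : IsOptimal n X μ u v θ x t) (hk : k < n)
    (hμ : 0 < μ k) (hfeas : DFeas n X u θ (update x k a) (update t k b)) :
    v a (θ k) + b ≤ v (x k) (θ k) + t k := by
  have hle := h.2 _ _ hfeas
  rw [obj_update hk] at hle
  exact sub_nonpos.1 (nonpos_of_mul_nonpos_right (by linarith) hμ)

lemma IsOptimal.update_of_eq {k : ℕ} {a b : ℝ} (h : IsOptimal n X μ u v θ x t) (hk : k < n)
    (hfeas : DFeas n X u θ (update x k a) (update t k b))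
    (heq : v a (θ k) + b = v (x k) (θ k) + t k) :
    IsOptimal n X μ u v θ (update x k a) (update t k b) := by
  refine ⟨hfeas, fun x' t' h' => ?_⟩
  rw [obj_update hk, heq, sub_self, mul_zero, add_zero]
  exact h.2 x' t' h'

lemma DFeas.lower_compensated {k : ℕ} {a : ℝ} (hx : DFeas n X u θ x t) (hk : k < n)
    (ha : a ∈ X) (hak : a ≤ x k) (hID : IncreasingDiffOn X u)
    (hθ : ∀ i, k < i → i < n → θ k ≤ θ i) :
    DFeas n X u θ (update x k a) (update t k (t k - u (x k) (θ k) + u a (θ k))) := by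
  obtain ⟨hX, hIC, hIR⟩ := hx
  refine ⟨fun i hi => ?_, fun i j hji hi => ?_, fun i hi => ?_⟩
  · rcases eq_or_ne i k with rfl | hik
    · simpa only [update_self]
    · simpa only [update_of_ne hik] using hX i hi
  · rcases eq_or_ne i k with rfl | hik
    · simp only [update_self, update_of_ne hji.ne]
      linarith [hIC i j hji hi]
    rcases eq_or_ne j k with rfl | hjk
    · simp only [update_self, update_of_ne hik]
      linarith [hIC i j hji hi, hID a ha (x j) (hX j hk) hak _ _ (hθ i hji hi)]
    · simpa only [update_of_ne hik, update_of_ne hjk] using hIC i j hji hi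
  · rcases eq_or_ne i k with rfl | hik
    · simp only [update_self]
      linarith [hIR i hi]
    · simpa only [update_of_ne hik] using hIR i hi

lemma DFeas.pool_succ {k : ℕ} (hx : DFeas n X u θ x t) (hk : k + 1 < n)
    (hprefix : ∀ j ≤ k, x j ≤ x k) (hmono : ∀ y ∈ X, Monotone (u y))
    (hID : IncreasingDiffOn X u) (hθ : θ k ≤ θ (k + 1)) :
    DFeas n X u θ (update x (k + 1) (x k)) (update t (k + 1) (t k)) := by
  obtain ⟨hX, hIC, hIR⟩ := hx
  have hxk : x k ∈ X := hX k (by omega)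
  refine ⟨fun i hi => ?_, fun i j hji hi => ?_, fun i hi => ?_⟩
  · rcases eq_or_ne i (k + 1) with rfl | hik
    · simpa only [update_self]
    · simpa only [update_of_ne hik] using hX i hi
  · rcases eq_or_ne i (k + 1) with rfl | hik
    · simp only [update_self, update_of_ne hji.ne]
      rcases (Nat.lt_succ_iff.1 hji).eq_or_lt with rfl | hjk
      · exact le_rfl
      · linarith [hIC k j hjk (by omega),
          hID (x j) (hX j (by omega)) (x k) hxk (hprefix j hjk.le) _ _ hθ]
    rcases eq_or_ne j (k + 1) with rfl | hjk
    · simpa only [update_self, update_of_ne hik] using hIC i k (by omega) hi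
    · simpa only [update_of_ne hik, update_of_ne hjk] using hIC i j hji hi
  · rcases eq_or_ne i (k + 1) with rfl | hik
    · simp only [update_self]
      linarith [hIR k (by omega), hmono (x k) hxk hθ]
    · simpa only [update_of_ne hik] using hIR i hi

lemma IsOptimal.le_succ {p : ℕ} (hopt : IsOptimal n X μ u v θ x t) (hp : p + 1 < n)
    (hμ : ∀ i, i < n → 0 < μ i) (hθ : ∀ i j, i < j → j < n → θ i < θ j)
    (hmono : ∀ y ∈ X, Monotone (u y))
    (hSID : ∀ x ∈ X, ∀ x' ∈ X, x < x' → ∀ a a' : ℝ, a < a' →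
      u x' a - u x a < u x' a' - u x a')
    (hWSCD : ∀ x ∈ X, ∀ x' ∈ X, x < x' → ∀ a a' : ℝ, a < a' →
      0 < (u x' a + v x' a) - (u x a + v x a) →
      0 < (u x' a' + v x' a') - (u x a' + v x a'))
    (hprefix : ∀ x' t', IsOptimal n X μ u v θ x' t' → ∀ j ≤ p, x' j ≤ x' p) :
    x p ≤ x (p + 1) := by
  by_contra! hlt
  have hID := increasingDiffOn_of_strict hSID
  obtain ⟨hX, hIC, -⟩ := hopt.1
  have hxp := hX p (by omega)
  have hxs := hX (p + 1) hp
  have hθp : θ p < θ (p + 1) := hθ p (p + 1) (lt_add_one p) hp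
  have hfeas₁ := hopt.1.lower_compensated (by omega) hxs hlt.le hID
    fun i hpi hi => (hθ p i hpi hi).le
  have hs_low : u (x (p + 1)) (θ p) + v (x (p + 1)) (θ p) ≤ u (x p) (θ p) + v (x p) (θ p) := by
    linarith [hopt.update_le (by omega) (hμ p (by omega)) hfeas₁]
  have hs_high : u (x p) (θ (p + 1)) + v (x p) (θ (p + 1)) ≤
      u (x (p + 1)) (θ (p + 1)) + v (x (p + 1)) (θ (p + 1)) := by
    have := hopt.update_le hp (hμ _ hp) (hopt.1.pool_succ hp (hprefix x t hopt) hmono hID hθp.le)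
    linarith [hIC (p + 1) p (lt_add_one p) hp]
  have htie : u (x (p + 1)) (θ p) + v (x (p + 1)) (θ p) = u (x p) (θ p) + v (x p) (θ p) := by
    refine hs_low.antisymm (not_lt.1 fun h => ?_)
    linarith [hWSCD (x (p + 1)) hxs (x p) hxp hlt (θ p) (θ (p + 1)) hθp (sub_pos.2 h)]
  have hopt₁ := hopt.update_of_eq (by omega) hfeas₁ (by linarith)
  have hτ := hopt₁.update_le hp (hμ _ hp)
    (hopt₁.1.pool_succ hp (hprefix _ _ hopt₁) hmono hID hθp.le)
  simp only [update_self, update_of_ne (by omega : p + 1 ≠ p)] at hτ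
  -- `hτ` says pooling does not raise the transfer; strict increasing differences say it does.
  linarith [hIC (p + 1) p (lt_add_one p) hp, hSID (x (p + 1)) hxs (x p) hxp hlt _ _ hθp]

lemma IsOptimal.le_of_le {p j : ℕ} (hopt : IsOptimal n X μ u v θ x t) (hp : p < n)
    (hjp : j ≤ p) (hμ : ∀ i, i < n → 0 < μ i) (hθ : ∀ i j, i < j → j < n → θ i < θ j)
    (hmono : ∀ y ∈ X, Monotone (u y))
    (hSID : ∀ x ∈ X, ∀ x' ∈ X, x < x' → ∀ a a' : ℝ, a < a' →
      u x' a - u x a < u x' a' - u x a')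
    (hWSCD : ∀ x ∈ X, ∀ x' ∈ X, x < x' → ∀ a a' : ℝ, a < a' →
      0 < (u x' a + v x' a) - (u x a + v x a) →
      0 < (u x' a' + v x' a') - (u x a' + v x a')) :
    x j ≤ x p := by
  induction p generalizing x t j with
  | zero => rw [Nat.le_zero.1 hjp]
  | succ p ih =>
    have hstep := hopt.le_succ hp hμ hθ hmono hSID hWSCD
      fun x' t' hopt' j hj => ih hopt' (by omega) hj
    rcases Nat.le_succ_iff.1 hjp with hj | rfl
    · exact (ih hopt (by omega) hj).trans hstep
    · exact le_rfl

theorem stmt7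
    (n : ℕ) (X : Set ℝ)
    (θ μ : ℕ → ℝ)
    (hθ : ∀ i j, i < j → j < n → θ i < θ j)
    (hμpos : ∀ i, i < n → 0 < μ i)
    (u v : ℝ → ℝ → ℝ)
    (humono : ∀ x ∈ X, Monotone (u x))
    (hSID : ∀ x ∈ X, ∀ x' ∈ X, x < x' → ∀ a a' : ℝ, a < a' →
      u x' a - u x a < u x' a' - u x a')
    (hWSCD : ∀ x ∈ X, ∀ x' ∈ X, x < x' → ∀ a a' : ℝ, a < a' →
      0 < (u x' a + v x' a) - (u x a + v x a) →
      0 < (u x' a' + v x' a') - (u x a' + v x a'))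
    (x t : ℕ → ℝ) (hfeas : DFeas n X u θ x t)
    (hopt : ∀ x' t' : ℕ → ℝ, DFeas n X u θ x' t' →
      Obj n μ v θ x' t' ≤ Obj n μ v θ x t) :
    ∀ i j, i ≤ j → j < n → x i ≤ x j :=
  fun _ _ hij hjn =>
    IsOptimal.le_of_le ⟨hfeas, hopt⟩ hjn hij hμpos hθ humono hSID hWSCD
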